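/- arXiv:2605.09903 — 2 statements merged into one kernel-verified Lean document; each statement's English description precedes it below -/
import Mathlib

section
/- Let f : ℂ → ℂ be holomorphic on a neighborhood of the closed disc D̄(a, δ) and suppose f(D(a, δ)) ⊆ D(a, δ/2). Then f has a fixed point ζ ∈ D(a, δ/2), and for every z ∈ D(a, δ/2), the orbit f^n(z) converges to ζ. -/
open Metric Set Filter Topology
open scoped NNReal

/-!
On the closed disc `D̄(a, δ/2)` the continuous map `f` takes values in a compact subset of
`D(a, δ/2)`, hence in some smaller closed disc `D̄(a, ρ)` with `ρ < δ/2`. Every point of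
`D̄(a, ρ)` is the centre of a disc of radius `R > δ/2` inside `D(a, δ)`, on which `f - a` is
bounded by `δ/2`, so Cauchy's estimate gives `‖f'‖ ≤ (δ/2)/R < 1` on `D̄(a, ρ)`. Thus `f` is a
contraction of `D̄(a, ρ)` into itself, and the Banach fixed point theorem applies; orbits starting
in `D(a, δ/2)` enter `D̄(a, ρ)` after one step.
-/

theorem exists_fixedPoint_tendsto_iterate_of_mapsTo {α : Type*} [MetricSpace α] {f : α → α}
    {s t : Set α} {K : ℝ≥0} (hK : K < 1) (hf : LipschitzOnWith K f t) (ht : IsComplete t)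
    (hts : t ⊆ s) (hmaps : MapsTo f s t) (hs : s.Nonempty) :
    ∃ ζ ∈ t, f ζ = ζ ∧ ∀ z ∈ s, Tendsto (fun n => f^[n] z) atTop (𝓝 ζ) := by
  have hft : MapsTo f t t := hmaps.mono_left hts
  have hc : ContractingWith K (hft.restrict f t t) := ⟨hK, hf.to_restrict⟩
  obtain ⟨z₀, hz₀⟩ := hs
  obtain ⟨ζ, hζ, hfix, -, -⟩ := hc.exists_fixedPoint' ht hft (hmaps hz₀) (edist_ne_top _ _)
  refine ⟨ζ, hζ, hfix, fun z hz => ?_⟩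
  obtain ⟨ζ', hζ', hfix', hlim, -⟩ := hc.exists_fixedPoint' ht hft (hmaps hz) (edist_ne_top _ _)
  have hζ'ζ : ζ' = ζ :=
    congrArg Subtype.val <| hc.fixedPoint_unique' (x := ⟨ζ', hζ'⟩) (y := ⟨ζ, hζ⟩)
      (Subtype.ext hfix') (Subtype.ext hfix)
  rw [hζ'ζ] at hlim
  refine (tendsto_add_atTop_iff_nat 1).1 ?_
  simpa only [Function.iterate_succ_apply] using hlim

theorem Complex.norm_deriv_le_of_mapsTo_closedBall {f : ℂ → ℂ} {s : Set ℂ} {w z : ℂ} {M R : ℝ}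
    (hf : DifferentiableOn ℂ f s) (hmaps : MapsTo f s (closedBall w M)) (hR : 0 < R)
    (hzR : closedBall z R ⊆ s) : ‖deriv f z‖ ≤ M / R := by
  have hbound : ∀ x ∈ sphere z R, ‖f x - w‖ ≤ M := fun x hx =>
    mem_closedBall_iff_norm.1 (hmaps (hzR (sphere_subset_closedBall hx)))
  simpa only [deriv_sub_const] using
    Complex.norm_deriv_le_of_forall_mem_sphere_norm_le hR
      ((hf.sub_const w).diffContOnCl_ball hzR) hbound

theorem Complex.lipschitzOnWith_closedBall_of_mapsTo {f : ℂ → ℂ} {a w : ℂ} {r ρ M R : ℝ}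
    (hf : DifferentiableOn ℂ f (ball a r)) (hmaps : MapsTo f (ball a r) (closedBall w M))
    (hR : 0 < R) (hρR : ρ + R < r) :
    LipschitzOnWith (M / R).toNNReal f (closedBall a ρ) := by
  have hsub : ∀ z ∈ closedBall a ρ, closedBall z R ⊆ ball a r := fun z hz =>
    closedBall_subset_ball' (by linarith [mem_closedBall.1 hz])
  refine (convex_closedBall a ρ).lipschitzOnWith_of_nnnorm_deriv_le
    (fun z hz => hf.differentiableAt (isOpen_ball.mem_nhds
      (hsub z hz (mem_closedBall_self hR.le)))) fun z hz => ?_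
  rw [← NNReal.coe_le_coe, coe_nnnorm]
  exact (Complex.norm_deriv_le_of_mapsTo_closedBall hf hmaps hR (hsub z hz)).trans
    (Real.le_coe_toNNReal _)

theorem stmt_4_general (f : ℂ → ℂ) (a : ℂ) (δ : ℝ) (hδ : 0 < δ)
    (U : Set ℂ) (hUa : closedBall a δ ⊆ U)
    (hf : DifferentiableOn ℂ f U)
    (hmap : f '' ball a δ ⊆ ball a (δ / 2)) :
    ∃ ζ ∈ ball a (δ / 2), f ζ = ζ ∧
      ∀ z ∈ ball a (δ / 2),
        Filter.Tendsto (fun n => f^[n] z) Filter.atTop (nhds ζ) := by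
  have hfd : DifferentiableOn ℂ f (ball a δ) := hf.mono (ball_subset_closedBall.trans hUa)
  have hsub : closedBall a (δ / 2) ⊆ ball a δ := closedBall_subset_ball (by linarith)
  obtain ⟨ρ, hρ, hρmaps⟩ : ∃ ρ < δ / 2, f '' closedBall a (δ / 2) ⊆ ball a ρ :=
    exists_lt_subset_ball
      ((isCompact_closedBall a _).image_of_continuousOn (hfd.continuousOn.mono hsub)).isClosed
      ((image_mono hsub).trans hmap)
  -- any radius in `(δ/2, δ - ρ)` works; this is the midpoint
  set R : ℝ := 3 * δ / 4 - ρ / 2 with hR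
  have hlip : LipschitzOnWith ((δ / 2) / R).toNNReal f (closedBall a ρ) :=
    Complex.lipschitzOnWith_closedBall_of_mapsTo hfd
      ((mapsTo_iff_image_subset.2 hmap).mono_right ball_subset_closedBall)
      (by linarith) (by linarith)
  have hK : ((δ / 2) / R).toNNReal < 1 := by
    rw [Real.toNNReal_lt_one, div_lt_one (by linarith)]
    linarith
  obtain ⟨ζ, hζ, hfix, hlim⟩ := exists_fixedPoint_tendsto_iterate_of_mapsTo hK hlip
    isClosed_closedBall.isComplete (closedBall_subset_ball hρ)
    (fun z hz => ball_subset_closedBall (hρmaps ⟨z, ball_subset_closedBall hz, rfl⟩))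
    ⟨a, mem_ball_self (by linarith)⟩
  exact ⟨ζ, closedBall_subset_ball hρ hζ, hfix, hlim⟩

/-- If `f` is holomorphic on a neighborhood of the closed disc `D̄(a, δ)` and maps
`D(a, δ)` into `D(a, δ/2)`, then `f` has a fixed point `ζ ∈ D(a, δ/2)` and every
orbit starting in `D(a, δ/2)` converges to `ζ`. -/
theorem stmt_4 (f : ℂ → ℂ) (a : ℂ) (δ : ℝ) (hδ : 0 < δ)
    (U : Set ℂ) (hU : IsOpen U) (hUa : closedBall a δ ⊆ U)
    (hf : DifferentiableOn ℂ f U)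
    (hmap : f '' ball a δ ⊆ ball a (δ / 2)) :
    ∃ ζ ∈ ball a (δ / 2), f ζ = ζ ∧
      ∀ z ∈ ball a (δ / 2),
        Filter.Tendsto (fun n => f^[n] z) Filter.atTop (nhds ζ) :=
  stmt_4_general f a δ hδ U hUa hf hmap
end

section
/- Let f : ℂ → ℂ be holomorphic on a neighborhood of the closed disc D̄(a, δ/2) with f(D(a, δ/2)) ⊆ D(a, δ/2), and suppose f has an attracting fixed point ζ ∈ D(a, δ/2). Then the orbit of every point of D(a, δ/2) under f converges to ζ. -/
/-!
Conjugating `f` by the affine map `D(a, R) → 𝔻` followed by a Möbius automorphism of `𝔻` that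
sends the image of `ζ` to `0` gives a holomorphic self-map `G` of the unit disc with `G 0 = 0` and
`|G'(0)| = |f'(ζ)| < 1`. By the Schwarz lemma `|G v / v| ≤ 1`, and by the maximum principle this is
strict everywhere, since it is strict at `0`. Hence on each closed disc of radius `r < 1` we get
`|G v| ≤ c |v|` for some `c < 1`; such a disc is `G`-invariant, so `G`-orbits tend to `0`
geometrically and `f`-orbits tend to `ζ`.
-/

open Metric Set Filter Function ComplexConjugate Topology

noncomputable def diskAut (w u : ℂ) : ℂ := (u - w) / (1 - conj w * u)

section diskAut

variable {w : ℂ}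

theorem one_sub_conj_mul_ne_zero {u : ℂ} (hw : ‖w‖ < 1) (hu : ‖u‖ < 1) : 1 - conj w * u ≠ 0 := by
  have : ‖conj w * u‖ < 1 := by
    rw [norm_mul, Complex.norm_conj]
    exact mul_lt_one_of_nonneg_of_lt_one_left (norm_nonneg w) hw hu.le
  intro h
  rw [← sub_eq_zero.1 h, norm_one] at this
  exact this.false

theorem normSq_one_sub_conj_mul_sub_normSq_sub (w u : ℂ) :
    Complex.normSq (1 - conj w * u) - Complex.normSq (u - w) =
      (1 - Complex.normSq u) * (1 - Complex.normSq w) := by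
  simp only [Complex.normSq_apply, Complex.sub_re, Complex.sub_im, Complex.mul_re, Complex.mul_im,
    Complex.conj_re, Complex.conj_im, Complex.one_re, Complex.one_im]
  ring

theorem norm_diskAut_lt_one {u : ℂ} (hw : ‖w‖ < 1) (hu : ‖u‖ < 1) : ‖diskAut w u‖ < 1 := by
  rw [diskAut, norm_div, div_lt_one (norm_pos_iff.2 (one_sub_conj_mul_ne_zero hw hu))]
  have key := normSq_one_sub_conj_mul_sub_normSq_sub w u
  simp only [Complex.normSq_eq_norm_sq] at key
  have : 0 < (1 - ‖u‖ ^ 2) * (1 - ‖w‖ ^ 2) := by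
    apply mul_pos <;> nlinarith [norm_nonneg u, norm_nonneg w]
  exact lt_of_pow_lt_pow_left₀ 2 (norm_nonneg _) (by linarith)

theorem diskAut_neg_diskAut {u : ℂ} (hw : ‖w‖ < 1) (hu : ‖u‖ < 1) :
    diskAut (-w) (diskAut w u) = u := by
  have hD := one_sub_conj_mul_ne_zero hw hu
  have hK := one_sub_conj_mul_ne_zero hw hw
  have hnum : diskAut w u + w = u * (1 - conj w * w) / (1 - conj w * u) := by
    rw [diskAut, div_add' _ _ _ hD]; ring
  have hden : 1 + conj w * diskAut w u = (1 - conj w * w) / (1 - conj w * u) := by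
    rw [diskAut, mul_div_assoc', add_div' _ _ _ hD]; ring
  rw [diskAut, map_neg, sub_neg_eq_add, neg_mul, sub_neg_eq_add, hnum, hden,
    div_div_div_cancel_right₀ hD, mul_div_cancel_right₀ _ hK]

theorem diskAut_neg_zero (w : ℂ) : diskAut (-w) 0 = w := by simp [diskAut]

theorem differentiableOn_diskAut (hw : ‖w‖ < 1) : DifferentiableOn ℂ (diskAut w) (ball 0 1) :=
  fun _ hu => ((differentiableAt_id.sub_const w).div
    ((differentiableAt_const _).sub (differentiableAt_id.const_mul _))
    (one_sub_conj_mul_ne_zero hw (mem_ball_zero_iff.1 hu))).differentiableWithinAt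

end diskAut

structure IsBiholomorphOn (φ ψ : ℂ → ℂ) (s t : Set ℂ) : Prop where
  mapsTo : MapsTo φ s t
  mapsTo_symm : MapsTo ψ t s
  invOn : InvOn ψ φ s t
  differentiableOn : DifferentiableOn ℂ φ s
  differentiableOn_symm : DifferentiableOn ℂ ψ t

namespace IsBiholomorphOn

variable {φ ψ φ' ψ' : ℂ → ℂ} {s t p : Set ℂ}

theorem comp (h : IsBiholomorphOn φ ψ s t) (h' : IsBiholomorphOn φ' ψ' t p) :
    IsBiholomorphOn (φ' ∘ φ) (ψ ∘ ψ') s p where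
  mapsTo := h'.mapsTo.comp h.mapsTo
  mapsTo_symm := h.mapsTo_symm.comp h'.mapsTo_symm
  invOn := h.invOn.comp h'.invOn h.mapsTo h'.mapsTo_symm
  differentiableOn := h'.differentiableOn.comp h.differentiableOn h.mapsTo
  differentiableOn_symm := h.differentiableOn_symm.comp h'.differentiableOn_symm h'.mapsTo_symm

end IsBiholomorphOn

theorem isBiholomorphOn_diskAut {w : ℂ} (hw : ‖w‖ < 1) :
    IsBiholomorphOn (diskAut w) (diskAut (-w)) (ball 0 1) (ball 0 1) := by
  have hw' : ‖-w‖ < 1 := by rwa [norm_neg]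
  have hmaps : ∀ {v : ℂ}, ‖v‖ < 1 → MapsTo (diskAut v) (ball 0 1) (ball 0 1) := fun hv _ hu =>
    mem_ball_zero_iff.2 (norm_diskAut_lt_one hv (mem_ball_zero_iff.1 hu))
  refine ⟨hmaps hw, hmaps hw', ⟨fun u hu => ?_, fun u hu => ?_⟩,
    differentiableOn_diskAut hw, differentiableOn_diskAut hw'⟩
  · exact diskAut_neg_diskAut hw (mem_ball_zero_iff.1 hu)
  · simpa using diskAut_neg_diskAut hw' (mem_ball_zero_iff.1 hu)

theorem isBiholomorphOn_affine {a : ℂ} {R : ℝ} (hR : 0 < R) :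
    IsBiholomorphOn (fun z => (z - a) / R) (fun u => a + R * u) (ball a R) (ball 0 1) := by
  have hR' : (R : ℂ) ≠ 0 := Complex.ofReal_ne_zero.2 hR.ne'
  refine ⟨fun z hz => ?_, fun u hu => ?_, ⟨fun z _ => ?_, fun u _ => ?_⟩, by fun_prop, by fun_prop⟩
  · rw [mem_ball_zero_iff, norm_div, Complex.norm_real, Real.norm_of_nonneg hR.le,
      div_lt_one hR, ← dist_eq_norm]
    exact hz
  · rw [mem_ball, dist_eq_norm, add_sub_cancel_left, norm_mul, Complex.norm_real,
      Real.norm_of_nonneg hR.le]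
    exact mul_lt_of_lt_one_right hR (mem_ball_zero_iff.1 hu)
  · simp only
    field_simp
    ring
  · simp only
    field_simp
    ring

theorem exists_isBiholomorphOn_ball {a ζ : ℂ} {R : ℝ} (hζ : ζ ∈ ball a R) :
    ∃ φ ψ : ℂ → ℂ, IsBiholomorphOn φ ψ (ball a R) (ball 0 1) ∧ ψ 0 = ζ := by
  have hR := pos_of_mem_ball hζ
  have hw := (isBiholomorphOn_affine (a := a) hR).mapsTo hζ
  refine ⟨_, _,
    (isBiholomorphOn_affine hR).comp (isBiholomorphOn_diskAut (mem_ball_zero_iff.1 hw)), ?_⟩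
  have hR' : (R : ℂ) ≠ 0 := Complex.ofReal_ne_zero.2 hR.ne'
  simp only [comp_apply, diskAut_neg_zero]
  field_simp
  ring

theorem deriv_comp_comp_of_leftInverse {𝕜 : Type*} [NontriviallyNormedField 𝕜]
    {f φ ψ : 𝕜 → 𝕜} {x y : 𝕜} (hψy : ψ y = x) (hfx : f x = x)
    (hφ : DifferentiableAt 𝕜 φ x) (hf : DifferentiableAt 𝕜 f x) (hψ : DifferentiableAt 𝕜 ψ y)
    (hφψ : φ ∘ ψ =ᶠ[𝓝 y] id) :
    deriv (φ ∘ f ∘ ψ) y = deriv f x := by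
  subst hψy
  have hinv : deriv φ (ψ y) * deriv ψ y = 1 :=
    (hφ.hasDerivAt.comp y hψ.hasDerivAt).unique ((hasDerivAt_id y).congr_of_eventuallyEq hφψ)
  have hφ' : HasDerivAt φ (deriv φ (ψ y)) (f (ψ y)) := by rw [hfx]; exact hφ.hasDerivAt
  rw [(hφ'.comp y (hf.hasDerivAt.comp y hψ.hasDerivAt)).deriv]
  linear_combination deriv f (ψ y) * hinv

theorem tendsto_iterate_of_dist_le_mul_dist {X : Type*} [PseudoMetricSpace X] {G : X → X}
    {x u : X} {r c : ℝ} (hc₀ : 0 ≤ c) (hc₁ : c < 1)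
    (hG : ∀ v ∈ closedBall x r, dist (G v) x ≤ c * dist v x) (hu : u ∈ closedBall x r) :
    Tendsto (fun n => G^[n] u) atTop (𝓝 x) := by
  have key : ∀ n : ℕ, G^[n] u ∈ closedBall x r ∧ dist (G^[n] u) x ≤ c ^ n * dist u x := by
    intro n
    induction n with
    | zero => simpa using hu
    | succ n ih =>
      obtain ⟨hmem, hdist⟩ := ih
      have hstep := hG _ hmem
      rw [iterate_succ_apply']
      refine ⟨?_, ?_⟩
      · rw [mem_closedBall] at hmem ⊢
        nlinarith [dist_nonneg (x := G^[n] u) (y := x)]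
      · calc dist (G (G^[n] u)) x ≤ c * (c ^ n * dist u x) :=
              hstep.trans (mul_le_mul_of_nonneg_left hdist hc₀)
          _ = c ^ (n + 1) * dist u x := by ring
  refine tendsto_iff_dist_tendsto_zero.2 (squeeze_zero (fun _ => dist_nonneg)
    (fun n => (key n).2) ?_)
  simpa using (tendsto_pow_atTop_nhds_zero_of_lt_one hc₀ hc₁).mul_const (dist u x)

section Schwarz

variable {G : ℂ → ℂ} (hd : DifferentiableOn ℂ G (ball 0 1))
  (hmap : MapsTo G (ball 0 1) (ball 0 1)) (h₀ : G 0 = 0) (hd₀ : ‖deriv G 0‖ < 1)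
include hd hmap h₀ hd₀

theorem norm_dslope_lt_one {v : ℂ} (hv : v ∈ ball 0 1) : ‖dslope G 0 v‖ < 1 := by
  have hle : ∀ z ∈ ball (0 : ℂ) 1, ‖dslope G 0 z‖ ≤ 1 := fun z hz => by
    simpa using Complex.norm_dslope_le_div_of_mapsTo_ball hd
      (hmap.mono_right (by rw [h₀]; exact ball_subset_closedBall)) hz
  refine (hle v hv).lt_of_ne fun hv₁ => hd₀.ne ?_
  have hmax : IsMaxOn (norm ∘ dslope G 0) (ball 0 1) v := fun z hz => by
    simpa [hv₁] using hle z hz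
  have := Complex.norm_eqOn_of_isPreconnected_of_isMaxOn (convex_ball (0 : ℂ) 1).isPreconnected
    isOpen_ball ((Complex.differentiableOn_dslope (ball_mem_nhds 0 one_pos)).2 hd) hv hmax
    (mem_ball_self one_pos)
  simpa [hv₁] using this

theorem exists_norm_le_mul_norm_of_mem_closedBall {r : ℝ} (hr₀ : 0 ≤ r) (hr₁ : r < 1) :
    ∃ c, 0 ≤ c ∧ c < 1 ∧ ∀ v ∈ closedBall (0 : ℂ) r, ‖G v‖ ≤ c * ‖v‖ := by
  have hsub : closedBall (0 : ℂ) r ⊆ ball 0 1 := closedBall_subset_ball hr₁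
  obtain ⟨v₀, hv₀, hmax⟩ := (isCompact_closedBall (0 : ℂ) r).exists_isMaxOn
    ⟨0, mem_closedBall_self hr₀⟩ (((Complex.differentiableOn_dslope
      (ball_mem_nhds 0 one_pos)).2 hd).continuousOn.norm.mono hsub)
  refine ⟨‖dslope G 0 v₀‖, norm_nonneg _, norm_dslope_lt_one hd hmap h₀ hd₀ (hsub hv₀),
    fun v hv => ?_⟩
  have hGv : G v = v * dslope G 0 v := by simpa [h₀] using (sub_smul_dslope G 0 v).symm
  rw [hGv, norm_mul, mul_comm]
  exact mul_le_mul_of_nonneg_right (hmax hv) (norm_nonneg v)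

theorem tendsto_iterate_nhds_zero {u : ℂ} (hu : u ∈ ball 0 1) :
    Tendsto (fun n => G^[n] u) atTop (𝓝 0) := by
  rw [mem_ball_zero_iff] at hu
  have hur : ‖u‖ < (‖u‖ + 1) / 2 := by linarith
  obtain ⟨c, hc₀, hc₁, hc⟩ := exists_norm_le_mul_norm_of_mem_closedBall hd hmap h₀ hd₀
    ((norm_nonneg u).trans hur.le) (by linarith)
  refine tendsto_iterate_of_dist_le_mul_dist hc₀ hc₁ (fun v hv => ?_)
    (mem_closedBall_zero_iff.2 hur.le)
  simpa only [dist_zero_right] using hc v hv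

end Schwarz

theorem tendsto_iterate_of_leftInvOn {X Y : Type*} [TopologicalSpace X] [TopologicalSpace Y]
    {f : X → X} {φ : X → Y} {ψ : Y → X} {s : Set X} {y : Y} {z : X} (hf : MapsTo f s s)
    (hψφ : LeftInvOn ψ φ s) (hψ : ContinuousAt ψ y) (hz : z ∈ s)
    (hG : Tendsto (fun n => (φ ∘ f ∘ ψ)^[n] (φ z)) atTop (𝓝 y)) :
    Tendsto (fun n => f^[n] z) atTop (𝓝 (ψ y)) := by
  have hconj : ∀ n, (φ ∘ f ∘ ψ)^[n] (φ z) = φ (f^[n] z) := by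
    intro n
    induction n with
    | zero => rfl
    | succ n ih =>
      rw [iterate_succ_apply', iterate_succ_apply', ih, comp_apply, comp_apply,
        hψφ (hf.iterate n hz)]
  exact (hψ.tendsto.comp hG).congr fun n => by
    rw [comp_apply, hconj, hψφ (hf.iterate n hz)]

theorem tendsto_iterate_of_isBiholomorphOn {φ ψ f : ℂ → ℂ} {s : Set ℂ} (hs : IsOpen s)
    (hχ : IsBiholomorphOn φ ψ s (ball 0 1)) (hf : DifferentiableOn ℂ f s) (hmap : MapsTo f s s)
    (hfix : f (ψ 0) = ψ 0) (hattr : ‖deriv f (ψ 0)‖ < 1) {z : ℂ} (hz : z ∈ s) :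
    Tendsto (fun n => f^[n] z) atTop (𝓝 (ψ 0)) := by
  have h₀ : ball (0 : ℂ) 1 ∈ 𝓝 0 := ball_mem_nhds 0 one_pos
  have hψ₀ : s ∈ 𝓝 (ψ 0) := hs.mem_nhds (hχ.mapsTo_symm (mem_of_mem_nhds h₀))
  have hψ := hχ.differentiableOn_symm.differentiableAt h₀
  have hGmaps : MapsTo (φ ∘ f ∘ ψ) (ball 0 1) (ball 0 1) :=
    hχ.mapsTo.comp (hmap.comp hχ.mapsTo_symm)
  have hGdiff : DifferentiableOn ℂ (φ ∘ f ∘ ψ) (ball 0 1) :=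
    hχ.differentiableOn.comp (hf.comp hχ.differentiableOn_symm hχ.mapsTo_symm)
      (hmap.comp hχ.mapsTo_symm)
  have hG₀ : (φ ∘ f ∘ ψ) 0 = 0 := by
    simp only [comp_apply, hfix, hχ.invOn.2 (mem_of_mem_nhds h₀)]
  have hGderiv : deriv (φ ∘ f ∘ ψ) 0 = deriv f (ψ 0) :=
    deriv_comp_comp_of_leftInverse rfl hfix (hχ.differentiableOn.differentiableAt hψ₀)
      (hf.differentiableAt hψ₀) hψ (Filter.mem_of_superset h₀ fun _ hu => hχ.invOn.2 hu)
  exact tendsto_iterate_of_leftInvOn hmap hχ.invOn.1 hψ.continuousAt hz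
    (tendsto_iterate_nhds_zero hGdiff hGmaps hG₀ (hGderiv ▸ hattr) (hχ.mapsTo hz))

theorem tendsto_iterate_of_mapsTo_ball {f : ℂ → ℂ} {a ζ z : ℂ} {R : ℝ}
    (hf : DifferentiableOn ℂ f (ball a R)) (hmap : MapsTo f (ball a R) (ball a R))
    (hζ : ζ ∈ ball a R) (hfix : f ζ = ζ) (hattr : ‖deriv f ζ‖ < 1) (hz : z ∈ ball a R) :
    Tendsto (fun n => f^[n] z) atTop (𝓝 ζ) := by
  obtain ⟨φ, ψ, hχ, rfl⟩ := exists_isBiholomorphOn_ball hζ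
  exact tendsto_iterate_of_isBiholomorphOn isOpen_ball hχ hf hmap hfix hattr hz

theorem stmt_5_general (f : ℂ → ℂ) (a : ℂ) (δ : ℝ)
    (U : Set ℂ) (hUa : closedBall a (δ / 2) ⊆ U)
    (hf : DifferentiableOn ℂ f U)
    (hmap : f '' ball a (δ / 2) ⊆ ball a (δ / 2))
    (ζ : ℂ) (hζ : ζ ∈ ball a (δ / 2)) (hfix : f ζ = ζ)
    (hattr : ‖deriv f ζ‖ < 1) :
    ∀ z ∈ ball a (δ / 2),
      Filter.Tendsto (fun n => f^[n] z) Filter.atTop (nhds ζ) := fun _ hz =>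
  tendsto_iterate_of_mapsTo_ball (hf.mono (ball_subset_closedBall.trans hUa))
    (mapsTo_iff_image_subset.2 hmap) hζ hfix hattr hz

/-- If `f` is holomorphic on a neighborhood of `D̄(a, δ/2)`, maps `D(a, δ/2)` into
itself, and has an attracting fixed point `ζ ∈ D(a, δ/2)`, then every orbit
starting in `D(a, δ/2)` converges to `ζ`. -/
theorem stmt_5 (f : ℂ → ℂ) (a : ℂ) (δ : ℝ) (hδ : 0 < δ)
    (U : Set ℂ) (hU : IsOpen U) (hUa : closedBall a (δ / 2) ⊆ U)
    (hf : DifferentiableOn ℂ f U)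
    (hmap : f '' ball a (δ / 2) ⊆ ball a (δ / 2))
    (ζ : ℂ) (hζ : ζ ∈ ball a (δ / 2)) (hfix : f ζ = ζ)
    (hattr : ‖deriv f ζ‖ < 1) :
    ∀ z ∈ ball a (δ / 2),
      Filter.Tendsto (fun n => f^[n] z) Filter.atTop (nhds ζ) :=
  stmt_5_general f a δ U hUa hf hmap ζ hζ hfix hattr
end
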